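/- arXiv:1808.04282 — 3 statements merged into one kernel-verified Lean document; each statement's English description precedes it below -/
import Mathlib

section
/- Define f_{m,k}(q) by (1-q)/((zq;q)_k (q/z;q)_k) = ∑_{m∈ℤ} z^m f_{m,k}(q). Then for every m ≠ 0, f_{m,2}(q) = q^{|m|} ( (1 - q^{|m|+1})/((1-q^2)(1-q^3)) + q^{|m|+3}/((1-q^3)(1-q^4)) ). -/
/-!
Writing `β = (x, y)`, the two constraints on a pair `(α, β)` counted by `a_{2,M}(n)` determine `α`,
which exists iff `2x + 3y + M ≤ n ≤ 3x + 4y + 2M`. The lower bound never exceeds the upper one,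
so `a_{2,M}(n) = C_{2,3}(n - M) - C_{3,4}(n - 2M - 1)`, where `C_{a,b}(j)` counts the solutions of
`ax + by ≤ j`. Multiplying by `1 - q` turns each `C_{a,b}` into the count of solutions of
`ax + by = j`, giving `f_{M,2} = q^M/((1-q^2)(1-q^3)) - q^{2M+1}/((1-q^3)(1-q^4))`, and the
identity `1/((1-q^2)(1-q^3)) = (1+q^2)/((1-q^3)(1-q^4))` rewrites this into the claimed form.
Negative `m` reduce to `|m|` by the symmetry `z ↔ 1/z`.
-/

/-- `akm k m n` is the coefficient of `z^m q^n` in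
`1/((qz;q)_k (q/z;q)_k) = ∏_{i=1}^{k} 1/((1 - z q^i)(1 - q^i/z))`, where
`(x;q)_k = ∏_{i=0}^{k-1} (1 - x q^i)`: it counts pairs `(α, β)` of `k`-tuples of
nonnegative integers with `∑_{i=1}^k i(α_i + β_i) = n` and `∑ α_i - ∑ β_i = m`. -/
def akm (k : ℕ) (m : ℤ) (n : ℕ) : ℕ :=
  (Finset.univ.filter
    (fun p : (Fin k → Fin (n + 1)) × (Fin k → Fin (n + 1)) =>
      (∑ i : Fin k, (i.1 + 1) * (((p.1 i : ℕ)) + (p.2 i : ℕ)) = n) ∧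
      ((∑ i : Fin k, ((p.1 i : ℕ) : ℤ)) - ∑ i : Fin k, ((p.2 i : ℕ) : ℤ)) = m)).card

/-- `fmk k m n` is the coefficient of `q^n` in `f_{m,k}(q)`, which is defined by
`(1-q)/((zq;q)_k (q/z;q)_k) = ∑_{m ∈ ℤ} z^m f_{m,k}(q)`; thus
`fmk k m n = a_{k,m}(n) - a_{k,m}(n-1)`. -/
def fmk (k : ℕ) (m : ℤ) (n : ℕ) : ℤ :=
  (akm k m n : ℤ) - (if n = 0 then 0 else (akm k m (n - 1) : ℤ))

/-- The coefficient of `q^n` in `q^s/((1-q^a)(1-q^b)) = ∑_{i,j≥0} q^{s+ai+bj}`. -/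
def geomCoeff (s a b n : ℕ) : ℤ :=
  if s ≤ n then
    (((Finset.range (n + 1) ×ˢ Finset.range (n + 1)).filter
      (fun p => a * p.1 + b * p.2 = n - s)).card : ℤ)
  else 0

open Finset

def grid (N : ℕ) : Finset (ℕ × ℕ) := range (N + 1) ×ˢ range (N + 1)

lemma mem_grid {N : ℕ} {p : ℕ × ℕ} : p ∈ grid N ↔ p.1 ≤ N ∧ p.2 ≤ N := by
  simp only [grid, mem_product, mem_range, Nat.lt_succ_iff]

lemma filter_grid_eq_of_le {P : ℕ × ℕ → Prop} [DecidablePred P] {N N' : ℕ} (hN : N ≤ N')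
    (hP : ∀ p, P p → p.1 ≤ N ∧ p.2 ≤ N) :
    (grid N').filter P = (grid N).filter P := by
  ext p
  simp only [mem_filter, mem_grid]
  constructor
  · rintro ⟨-, hp⟩
    exact ⟨hP p hp, hp⟩
  · rintro ⟨⟨h1, h2⟩, hp⟩
    exact ⟨⟨h1.trans hN, h2.trans hN⟩, hp⟩

/-- The coefficient of `q^j` in `1/((1-q^a)(1-q^b))`. -/
def lineCount (a b : ℕ) (j : ℤ) : ℕ :=
  ((grid j.toNat).filter fun p => ((a * p.1 + b * p.2 : ℕ) : ℤ) = j).card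

def lowerCount (a b : ℕ) (j : ℤ) : ℕ :=
  ((grid j.toNat).filter fun p => ((a * p.1 + b * p.2 : ℕ) : ℤ) ≤ j).card

section Counting

variable {a b : ℕ}

lemma le_toNat_of_mul_add_mul_le (ha : 0 < a) (hb : 0 < b) {j : ℤ} {p : ℕ × ℕ}
    (hp : ((a * p.1 + b * p.2 : ℕ) : ℤ) ≤ j) : p.1 ≤ j.toNat ∧ p.2 ≤ j.toNat := by
  have h1 : p.1 ≤ a * p.1 := Nat.le_mul_of_pos_left _ ha
  have h2 : p.2 ≤ b * p.2 := Nat.le_mul_of_pos_left _ hb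
  omega

lemma lowerCount_of_neg {j : ℤ} (hj : j < 0) : lowerCount a b j = 0 := by
  refine card_eq_zero.2 (filter_eq_empty_iff.2 fun p _ => ?_)
  omega

lemma card_filter_grid_eq_lowerCount (ha : 0 < a) (hb : 0 < b) {N : ℕ} {j : ℤ} (hj : j ≤ N) :
    ((grid N).filter fun p => ((a * p.1 + b * p.2 : ℕ) : ℤ) ≤ j).card = lowerCount a b j := by
  rw [lowerCount, filter_grid_eq_of_le (by omega) fun p hp => le_toNat_of_mul_add_mul_le ha hb hp]

lemma lowerCount_sub_lowerCount_sub_one (ha : 0 < a) (hb : 0 < b) (j : ℤ) :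
    (lowerCount a b j : ℤ) - lowerCount a b (j - 1) = lineCount a b j := by
  rcases lt_or_ge j 0 with hj | hj
  · rw [lowerCount_of_neg hj, lowerCount_of_neg (by omega), lineCount,
      card_eq_zero.2 (filter_eq_empty_iff.2 fun p _ => by omega)]
    rfl
  have hsplit : (grid j.toNat).filter (fun p => ((a * p.1 + b * p.2 : ℕ) : ℤ) ≤ j)
      = (grid j.toNat).filter (fun p => ((a * p.1 + b * p.2 : ℕ) : ℤ) ≤ j - 1) ∪
        (grid j.toNat).filter (fun p => ((a * p.1 + b * p.2 : ℕ) : ℤ) = j) := by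
    rw [← filter_or]
    exact filter_congr fun p _ => by omega
  rw [← card_filter_grid_eq_lowerCount ha hb (N := j.toNat) (j := j - 1) (by omega), lowerCount,
    lineCount, hsplit, card_union_of_disjoint]
  · push_cast
    ring
  · exact disjoint_filter.2 fun p _ h => by omega

lemma geomCoeff_eq_lineCount (ha : 0 < a) (hb : 0 < b) (s n : ℕ) :
    geomCoeff s a b n = lineCount a b ((n : ℤ) - s) := by
  unfold geomCoeff lineCount
  split_ifs with hs
  · rw [← filter_grid_eq_of_le (by omega : ((n : ℤ) - s).toNat ≤ n)
      fun p (hp : ((a * p.1 + b * p.2 : ℕ) : ℤ) = n - s) => le_toNat_of_mul_add_mul_le ha hb hp.le]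
    refine congrArg (fun t : Finset (ℕ × ℕ) => (#t : ℤ)) (filter_congr fun p _ => ?_)
    generalize a * p.1 + b * p.2 = t
    omega
  · rw [eq_comm, Nat.cast_eq_zero, card_eq_zero, filter_eq_empty_iff]
    intro p _
    omega

end Counting

/-- `1/((1-q^2)(1-q^3)) = (1+q^2)/((1-q^3)(1-q^4))`, read off by splitting the solutions of
`2x + 3y = j` according to the parity of `x`. -/
lemma lineCount_two_three (j : ℤ) :
    lineCount 2 3 j = lineCount 3 4 j + lineCount 3 4 (j - 2) := by
  unfold lineCount
  rw [← card_filter_add_card_filter_not (p := fun p : ℕ × ℕ => Even p.1)]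
  congr 1
  · refine card_nbij' (fun p => (p.2, p.1 / 2)) (fun p => (2 * p.2, p.1)) ?_ ?_ ?_ ?_ <;>
      intro p hp <;>
      simp only [mem_coe, mem_filter, mem_grid, Nat.even_iff, Prod.ext_iff, and_true,
        true_and] at hp ⊢ <;>
      omega
  · refine card_nbij' (fun p => (p.2, p.1 / 2)) (fun p => (2 * p.2 + 1, p.1)) ?_ ?_ ?_ ?_ <;>
      intro p hp <;>
      simp only [mem_coe, mem_filter, mem_grid, Nat.even_iff, Prod.ext_iff, and_true,
        true_and] at hp ⊢ <;>
      omega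

lemma akm_neg (k : ℕ) (m : ℤ) (n : ℕ) : akm k (-m) n = akm k m n := by
  refine card_nbij' Prod.swap Prod.swap ?_ ?_ (fun _ _ => rfl) (fun _ _ => rfl) <;>
    intro p hp <;>
    simp only [mem_coe, mem_filter, mem_univ, true_and, Prod.fst_swap, Prod.snd_swap] at hp ⊢ <;>
    refine ⟨?_, by omega⟩ <;>
    simpa only [add_comm] using hp.1

/-- The bijection sends `(α, β)` to `β`; `α` is recovered as `α₂ = n - M - 2β₁ - 3β₂`,
`α₁ = M + β₁ + β₂ - α₂`. -/
lemma akm_two_natCast (M n : ℕ) :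
    akm 2 M n = ((grid n).filter fun q : ℕ × ℕ =>
      2 * q.1 + 3 * q.2 + M ≤ n ∧ n ≤ 3 * q.1 + 4 * q.2 + 2 * M).card := by
  refine card_bij' (fun p _ => ((p.2 0 : ℕ), (p.2 1 : ℕ)))
    (fun q hq =>
      have hq : (q.1 ≤ n ∧ q.2 ≤ n) ∧ 2 * q.1 + 3 * q.2 + M ≤ n ∧ n ≤ 3 * q.1 + 4 * q.2 + 2 * M :=
        by simpa only [mem_filter, mem_grid] using hq
      (![⟨M + q.1 + q.2 - (n - (M + 2 * q.1 + 3 * q.2)), by omega⟩,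
          ⟨n - (M + 2 * q.1 + 3 * q.2), by omega⟩],
        ![⟨q.1, by omega⟩, ⟨q.2, by omega⟩]))
    ?_ ?_ ?_ ?_
  · intro p hp
    simp only [mem_filter, mem_univ, true_and, Fin.sum_univ_two, Fin.val_zero, Fin.val_one] at hp
    simp only [mem_filter, mem_grid]
    exact ⟨⟨Nat.lt_succ_iff.1 (p.2 0).isLt, Nat.lt_succ_iff.1 (p.2 1).isLt⟩, by omega, by omega⟩
  · intro q hq
    simp only [mem_filter, mem_grid] at hq
    simp only [mem_filter, mem_univ, true_and, Fin.sum_univ_two, Fin.val_zero, Fin.val_one,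
      Matrix.cons_val_zero, Matrix.cons_val_one]
    omega
  · intro p hp
    simp only [mem_filter, mem_univ, true_and, Fin.sum_univ_two, Fin.val_zero, Fin.val_one] at hp
    refine Prod.ext ?_ ?_ <;> funext i <;> fin_cases i <;> apply Fin.ext <;>
      simp only [Matrix.cons_val_zero, Matrix.cons_val_one, Fin.zero_eta, Fin.mk_one] <;> omega
  · intro q _
    rfl

lemma akm_two_natCast_eq_sub (M n : ℕ) :
    (akm 2 M n : ℤ) = lowerCount 2 3 ((n : ℤ) - M) - lowerCount 3 4 ((n : ℤ) - 2 * M - 1) := by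
  have hsplit := card_filter_add_card_filter_not
    (s := (grid n).filter fun q : ℕ × ℕ => 2 * q.1 + 3 * q.2 + M ≤ n)
    (fun q => n ≤ 3 * q.1 + 4 * q.2 + 2 * M)
  rw [filter_filter, filter_filter] at hsplit
  have hlower : ((grid n).filter fun q : ℕ × ℕ => 2 * q.1 + 3 * q.2 + M ≤ n).card
      = lowerCount 2 3 ((n : ℤ) - M) := by
    rw [← card_filter_grid_eq_lowerCount two_pos three_pos (N := n) (by omega)]
    exact congrArg card (filter_congr fun q _ => by omega)
  have hupper : ((grid n).filter fun q : ℕ × ℕ =>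
      2 * q.1 + 3 * q.2 + M ≤ n ∧ ¬n ≤ 3 * q.1 + 4 * q.2 + 2 * M).card
      = lowerCount 3 4 ((n : ℤ) - 2 * M - 1) := by
    rw [← card_filter_grid_eq_lowerCount three_pos four_pos (N := n) (by omega)]
    exact congrArg card (filter_congr fun q _ => by omega)
  rw [akm_two_natCast]
  omega

lemma akm_natAbs (k : ℕ) (m : ℤ) (n : ℕ) : akm k m.natAbs n = akm k m n := by
  rcases Int.natAbs_eq m with h | h
  · rw [← h]
  · rw [← neg_eq_iff_eq_neg.2 h, akm_neg]

theorem fm2_eq_general (m : ℤ) (n : ℕ) :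
    fmk 2 m n =
      geomCoeff m.natAbs 2 3 n - geomCoeff (2 * m.natAbs + 1) 2 3 n
        + geomCoeff (2 * m.natAbs + 3) 3 4 n := by
  set M := m.natAbs
  have hakm (N : ℕ) : (akm 2 m N : ℤ)
      = lowerCount 2 3 ((N : ℤ) - M) - lowerCount 3 4 ((N : ℤ) - 2 * M - 1) := by
    rw [← akm_natAbs, akm_two_natCast_eq_sub]
  have hprev : (if n = 0 then 0 else (akm 2 m (n - 1) : ℤ))
      = lowerCount 2 3 ((n : ℤ) - M - 1) - lowerCount 3 4 ((n : ℤ) - 2 * M - 1 - 1) := by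
    rcases n with _ | n
    · rw [if_pos rfl, lowerCount_of_neg (by omega), lowerCount_of_neg (by omega)]
      rfl
    · rw [if_neg n.succ_ne_zero, Nat.add_sub_cancel, hakm]
      push_cast
      ring_nf
  rw [fmk, hakm, hprev, geomCoeff_eq_lineCount two_pos three_pos,
    geomCoeff_eq_lineCount two_pos three_pos, geomCoeff_eq_lineCount three_pos four_pos,
    show (n : ℤ) - ↑(2 * M + 1) = n - 2 * M - 1 by push_cast; ring,
    show (n : ℤ) - ↑(2 * M + 3) = n - 2 * M - 1 - 2 by push_cast; ring]
  have h23 := lowerCount_sub_lowerCount_sub_one two_pos three_pos ((n : ℤ) - M)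
  have h34 := lowerCount_sub_lowerCount_sub_one three_pos four_pos ((n : ℤ) - 2 * M - 1)
  have hid := lineCount_two_three ((n : ℤ) - 2 * M - 1)
  omega

/-- For `m ≠ 0`,
`f_{m,2}(q) = q^{|m|} ((1-q^{|m|+1})/((1-q^2)(1-q^3)) + q^{|m|+3}/((1-q^3)(1-q^4)))`. -/
theorem fm2_eq (m : ℤ) (hm : m ≠ 0) (n : ℕ) :
    fmk 2 m n =
      geomCoeff m.natAbs 2 3 n - geomCoeff (2 * m.natAbs + 1) 2 3 n
        + geomCoeff (2 * m.natAbs + 3) 3 4 n :=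
  fm2_eq_general m n
end

section
/- Define f_{m,k}(q) by (1-q)/((zq;q)_k (q/z;q)_k) = ∑_{m∈ℤ} z^m f_{m,k}(q). Then for all k ≥ 0 and all integers m, f_{m,k+1}(q) = ∑_{n∈ℤ} f_{n,k}(q) · q^{(k+1)|m-n|}/(1 - q^{2k+2}). -/
open Finset

def B (k : ℕ) (m : ℤ) (n : ℕ) : Finset ((Fin k → ℕ) × (Fin k → ℕ)) :=
  ((Finset.Iic (fun _ => n)) ×ˢ (Finset.Iic (fun _ => n))).filter
    (fun p => (∑ i : Fin k, (i.1 + 1) * (p.1 i + p.2 i) = n) ∧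
      ((∑ i : Fin k, (p.1 i : ℤ)) - ∑ i : Fin k, (p.2 i : ℤ)) = m)

lemma akm_eq (k : ℕ) (m : ℤ) (n : ℕ) : akm k m n = (B k m n).card := by
  unfold akm B
  apply Finset.card_bij (i := fun p _ => ((fun i => (p.1 i : ℕ)), fun i => (p.2 i : ℕ)))
  · intro p hp
    simp only [mem_filter, mem_univ, true_and] at hp
    simp only [mem_filter, mem_product, mem_Iic, Pi.le_def]
    refine ⟨⟨fun i => ?_, fun i => ?_⟩, hp.1, hp.2⟩
    · calc (p.1 i : ℕ) ≤ (i.1 + 1) * ((p.1 i : ℕ) + (p.2 i : ℕ)) := by nlinarith []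
        _ ≤ ∑ i : Fin k, (i.1 + 1) * (((p.1 i : ℕ)) + (p.2 i : ℕ)) :=
          Finset.single_le_sum (f := fun i => (i.1+1) * ((p.1 i:ℕ)+(p.2 i:ℕ)))
            (fun _ _ => Nat.zero_le _) (mem_univ i)
        _ = n := hp.1
    · calc (p.2 i : ℕ) ≤ (i.1 + 1) * ((p.1 i : ℕ) + (p.2 i : ℕ)) := by nlinarith []
        _ ≤ ∑ i : Fin k, (i.1 + 1) * (((p.1 i : ℕ)) + (p.2 i : ℕ)) :=
          Finset.single_le_sum (f := fun i => (i.1+1) * ((p.1 i:ℕ)+(p.2 i:ℕ)))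
            (fun _ _ => Nat.zero_le _) (mem_univ i)
        _ = n := hp.1
  · intro p hp q hq h
    simp only [Prod.mk.injEq, funext_iff] at h
    ext i
    · exact h.1 i
    · exact h.2 i
  · intro b hb
    simp only [mem_filter, mem_product, mem_Iic, Pi.le_def] at hb
    refine ⟨(fun i => ⟨b.1 i, Nat.lt_succ_of_le (hb.1.1 i)⟩,
             fun i => ⟨b.2 i, Nat.lt_succ_of_le (hb.1.2 i)⟩), ?_, rfl⟩
    simp only [mem_filter, mem_univ, true_and]
    exact hb.2

def phi (k : ℕ) (p : (Fin (k+1) → ℕ) × (Fin (k+1) → ℕ)) : ℤ × ℕ :=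
  ((∑ i : Fin k, (p.1 i.castSucc : ℤ)) - ∑ i : Fin k, (p.2 i.castSucc : ℤ),
   min (p.1 (Fin.last k)) (p.2 (Fin.last k)))

lemma B_split (k N : ℕ) (m : ℤ) (p : (Fin (k+1) → ℕ) × (Fin (k+1) → ℕ))
    (hp : p ∈ B (k+1) m N) :
    (∑ i : Fin k, (i.1 + 1) * (p.1 i.castSucc + p.2 i.castSucc))
      + (k+1) * (p.1 (Fin.last k) + p.2 (Fin.last k)) = N ∧
    ((∑ i : Fin k, (p.1 i.castSucc : ℤ)) - ∑ i : Fin k, (p.2 i.castSucc : ℤ))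
      + ((p.1 (Fin.last k) : ℤ) - (p.2 (Fin.last k) : ℤ)) = m := by
  simp only [B, mem_filter] at hp
  obtain ⟨-, h1, h2⟩ := hp
  rw [Fin.sum_univ_castSucc] at h1
  rw [Fin.sum_univ_castSucc (f := fun i => ((p.1 i : ℕ) : ℤ)),
      Fin.sum_univ_castSucc (f := fun i => ((p.2 i : ℕ) : ℤ))] at h2
  simp only [Fin.coe_castSucc, Fin.val_last] at h1 h2 ⊢
  exact ⟨h1, by linarith⟩

lemma fiber_card (k : ℕ) (m n : ℤ) (N jj : ℕ)
    (h : (k+1)*(m-n).natAbs + (2*k+2)*jj ≤ N) :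
    ((B (k+1) m N).filter (fun p => phi k p = (n, jj))).card
      = akm k n (N - ((k+1)*(m-n).natAbs + (2*k+2)*jj)) := by
  rw [akm_eq]
  set o := (k+1)*(m-n).natAbs + (2*k+2)*jj with ho
  have key : ∀ p ∈ (B (k+1) m N).filter (fun p => phi k p = (n, jj)),
      p.1 (Fin.last k) = jj + (m-n).toNat ∧ p.2 (Fin.last k) = jj + (n-m).toNat ∧
      (∑ i : Fin k, (i.1 + 1) * (p.1 i.castSucc + p.2 i.castSucc)) = N - o ∧
      ((∑ i : Fin k, (p.1 i.castSucc : ℤ)) - ∑ i : Fin k, (p.2 i.castSucc : ℤ)) = n := by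
    intro p hp
    rw [mem_filter] at hp
    obtain ⟨h1, h2⟩ := B_split k N m p hp.1
    have hphi := hp.2
    simp only [phi, Prod.mk.injEq] at hphi
    obtain ⟨hn, hj⟩ := hphi
    set a := p.1 (Fin.last k)
    set b := p.2 (Fin.last k)
    rw [hn] at h2
    have hab : (a : ℤ) - b = m - n := by linarith
    have ha : a = jj + (m-n).toNat := by omega
    have hb : b = jj + (n-m).toNat := by omega
    have habs : a + b = (m-n).natAbs + 2*jj := by omega
    have hko : (k+1) * (a+b) = o := by rw [habs, ho]; ring
    exact ⟨ha, hb, by omega, hn⟩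
  refine Finset.card_bij' (fun p _ => (p.1 ∘ Fin.castSucc, p.2 ∘ Fin.castSucc))
    (fun p _ => (Fin.snoc p.1 (jj + (m-n).toNat), Fin.snoc p.2 (jj + (n-m).toNat)))
    ?_ ?_ ?_ ?_
  · -- forward membership
    intro p hp
    obtain ⟨ha, hb, hw, hn⟩ := key p hp
    simp only [B, mem_filter, mem_product, mem_Iic, Pi.le_def, Function.comp]
    refine ⟨⟨fun i => ?_, fun i => ?_⟩, by simpa using hw, by simpa using hn⟩
    · calc p.1 i.castSucc ≤ (i.1 + 1) * (p.1 i.castSucc + p.2 i.castSucc) := by nlinarith []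
        _ ≤ ∑ i : Fin k, (i.1 + 1) * (p.1 i.castSucc + p.2 i.castSucc) :=
          Finset.single_le_sum (f := fun i : Fin k => (i.1 + 1) * (p.1 i.castSucc + p.2 i.castSucc))
            (fun _ _ => Nat.zero_le _) (mem_univ i)
        _ = N - o := hw
    · calc p.2 i.castSucc ≤ (i.1 + 1) * (p.1 i.castSucc + p.2 i.castSucc) := by nlinarith []
        _ ≤ ∑ i : Fin k, (i.1 + 1) * (p.1 i.castSucc + p.2 i.castSucc) :=
          Finset.single_le_sum (f := fun i : Fin k => (i.1 + 1) * (p.1 i.castSucc + p.2 i.castSucc))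
            (fun _ _ => Nat.zero_le _) (mem_univ i)
        _ = N - o := hw
  · -- backward membership
    intro p hp
    simp only [B, mem_filter, mem_product, mem_Iic, Pi.le_def] at hp
    obtain ⟨⟨hb1, hb2⟩, hw, hn⟩ := hp
    set A := jj + (m-n).toNat with hA
    set Bv := jj + (n-m).toNat with hBv
    have hABo : (k+1) * (A + Bv) = o := by
      have hAB : A + Bv = (m-n).natAbs + 2*jj := by omega
      rw [hAB, ho]; ring
    have hAN : A ≤ N := by nlinarith [Nat.le_mul_of_pos_left A (Nat.succ_pos k)]
    have hBN : Bv ≤ N := by nlinarith [Nat.le_mul_of_pos_left Bv (Nat.succ_pos k)]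
    rw [mem_filter]
    constructor
    · simp only [B, mem_filter, mem_product, mem_Iic, Pi.le_def]
      refine ⟨⟨fun i => ?_, fun i => ?_⟩, ?_, ?_⟩
      · induction i using Fin.lastCases with
        | last => simpa [Fin.snoc_last]
        | cast i => simp only [Fin.snoc_castSucc]; exact le_trans (hb1 i) (Nat.sub_le _ _)
      · induction i using Fin.lastCases with
        | last => simpa [Fin.snoc_last]
        | cast i => simp only [Fin.snoc_castSucc]; exact le_trans (hb2 i) (Nat.sub_le _ _)
      · rw [Fin.sum_univ_castSucc]
        simp only [Fin.snoc_castSucc, Fin.snoc_last, Fin.coe_castSucc, Fin.val_last]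
        rw [hw]
        omega
      · simp only [Fin.sum_univ_castSucc, Fin.snoc_castSucc, Fin.snoc_last]
        rw [show ((∑ i : Fin k, (p.1 i : ℤ)) + A) - ((∑ i : Fin k, (p.2 i : ℤ)) + Bv)
            = ((∑ i : Fin k, (p.1 i : ℤ)) - (∑ i : Fin k, (p.2 i : ℤ))) + ((A:ℤ) - Bv) by ring,
           hn]
        have hABz : (A : ℤ) - Bv = m - n := by omega
        rw [hABz]; ring
    · simp only [phi, Prod.mk.injEq, Fin.snoc_last]
      constructor
      · simp only [Fin.snoc_castSucc]; exact hn
      · omega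
  · -- left inverse
    intro p hp
    obtain ⟨ha, hb, -, -⟩ := key p hp
    have e1 : Fin.snoc (p.1 ∘ Fin.castSucc) (jj + (m-n).toNat) = p.1 := by
      funext i
      induction i using Fin.lastCases with
      | last => simp [Fin.snoc_last, ha]
      | cast i => simp [Fin.snoc_castSucc]
    have e2 : Fin.snoc (p.2 ∘ Fin.castSucc) (jj + (n-m).toNat) = p.2 := by
      funext i
      induction i using Fin.lastCases with
      | last => simp [Fin.snoc_last, hb]
      | cast i => simp [Fin.snoc_castSucc]
    exact Prod.ext e1 e2
  · -- right inverse
    intro p hp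
    refine Prod.ext ?_ ?_ <;> · funext i; simp [Fin.snoc_castSucc]

lemma fiber_bound (p : (Fin (k+1) → ℕ) × (Fin (k+1) → ℕ)) (hp : p ∈ B (k+1) m N) :
    (k+1) * (m - (phi k p).1).natAbs + (2*k+2) * (phi k p).2 ≤ N := by
  obtain ⟨h1, h2⟩ := B_split k N m p hp
  set a := p.1 (Fin.last k)
  set b := p.2 (Fin.last k)
  have hmn : m - (phi k p).1 = (a : ℤ) - b := by simp only [phi]; linarith
  have hj : (phi k p).2 = min a b := rfl
  rw [hmn, hj]
  have habs : ((a:ℤ) - b).natAbs + 2 * min a b = a + b := by omega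
  calc (k+1) * ((a:ℤ)-b).natAbs + (2*k+2) * min a b
      = (k+1) * (((a:ℤ)-b).natAbs + 2 * min a b) := by ring
    _ = (k+1) * (a+b) := by rw [habs]
    _ ≤ N := by omega

lemma phi_mem (p : (Fin (k+1) → ℕ) × (Fin (k+1) → ℕ)) (hp : p ∈ B (k+1) m N) :
    phi k p ∈ Finset.Icc (m - (N:ℤ)) (m + (N:ℤ)) ×ˢ Finset.range (N+1) := by
  have hb := fiber_bound p hp
  rw [mem_product, mem_Icc, mem_range]
  have h1 : (m - (phi k p).1).natAbs ≤ N :=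
    le_trans (Nat.le_mul_of_pos_left _ (show 0 < k+1 by omega)) (by omega)
  have h2 : (phi k p).2 ≤ N :=
    le_trans (Nat.le_mul_of_pos_left _ (show 0 < 2*k+2 by omega)) (by omega)
  omega

lemma akm_rec (k : ℕ) (m : ℤ) (N : ℕ) :
    akm (k+1) m N = ∑ n ∈ Finset.Icc (m - (N:ℤ)) (m + (N:ℤ)), ∑ j ∈ Finset.range (N+1),
      if (k+1) * (m - n).natAbs + (2*k+2) * j ≤ N then
        akm k n (N - ((k+1) * (m - n).natAbs + (2*k+2) * j)) else 0 := by
  rw [akm_eq, Finset.card_eq_sum_card_fiberwise (f := phi k)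
      (t := Finset.Icc (m - (N:ℤ)) (m + (N:ℤ)) ×ˢ Finset.range (N+1)) (fun p hp => phi_mem p hp)]
  rw [Finset.sum_product]
  refine Finset.sum_congr rfl fun n _ => Finset.sum_congr rfl fun j _ => ?_
  by_cases h : (k+1) * (m - n).natAbs + (2*k+2) * j ≤ N
  · rw [if_pos h, fiber_card k m n N j h]
  · rw [if_neg h, Finset.card_eq_zero, Finset.filter_eq_empty_iff]
    intro p hp heq
    exact h (by simpa [heq] using fiber_bound p hp)

lemma akm_rec' (k : ℕ) (m : ℤ) (N : ℕ) :
    (akm (k+1) m N : ℤ) = ∑ n ∈ Finset.Icc (m - (N:ℤ)) (m + (N:ℤ)), ∑ j ∈ Finset.range (N+1),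
      if (k+1) * (m - n).natAbs + (2*k+2) * j ≤ N then
        (akm k n (N - ((k+1) * (m - n).natAbs + (2*k+2) * j)) : ℤ) else 0 := by
  rw [akm_rec]
  push_cast [apply_ite (fun x : ℕ => (x : ℤ))]
  rfl

/-- `f_{m,k+1}(q) = ∑_{n ∈ ℤ} f_{n,k}(q) q^{(k+1)|m-n|}/(1-q^{2k+2})`, stated
coefficientwise at `q^N` (the sum over `n` is supported on `|m - n| (k+1) ≤ N`). -/
theorem fmk_rec (k : ℕ) (m : ℤ) (N : ℕ) :
    fmk (k + 1) m N =
      ∑ n ∈ Finset.Icc (m - N) (m + N), ∑ j ∈ Finset.range (N + 1),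
        if (k + 1) * (m - n).natAbs + (2 * k + 2) * j ≤ N then
          fmk k n (N - ((k + 1) * (m - n).natAbs + (2 * k + 2) * j))
        else 0 := by
  rcases Nat.eq_zero_or_pos N with hN | hN
  · subst hN
    rw [show fmk (k+1) m 0 = (akm (k+1) m 0 : ℤ) by simp [fmk]]
    rw [akm_rec']
    refine Finset.sum_congr rfl fun n _ => ?_
    refine Finset.sum_congr rfl fun j _ => ?_
    split_ifs with h
    · have ho : (k+1) * (m - n).natAbs + (2*k+2) * j = 0 := by omega
      rw [ho]
      simp [fmk]
    · rfl
  · obtain ⟨M, rfl⟩ : ∃ M, N = M + 1 := ⟨N - 1, by omega⟩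
    rw [show fmk (k+1) m (M+1) = (akm (k+1) m (M+1) : ℤ) - (akm (k+1) m M : ℤ) by
      simp [fmk]]
    rw [akm_rec' k m (M+1), akm_rec' k m M]
    have inner : ∀ n : ℤ, (∑ j ∈ Finset.range (M+1),
        if (k+1) * (m - n).natAbs + (2*k+2) * j ≤ M then
          (akm k n (M - ((k+1) * (m - n).natAbs + (2*k+2) * j)) : ℤ) else 0)
      = ∑ j ∈ Finset.range (M+2),
        if (k+1) * (m - n).natAbs + (2*k+2) * j ≤ M then
          (akm k n (M - ((k+1) * (m - n).natAbs + (2*k+2) * j)) : ℤ) else 0 := by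
      intro n
      refine Finset.sum_subset (Finset.range_subset_range.2 (by omega)) (fun j hj hj' => ?_)
      rw [Finset.mem_range] at hj hj'
      have hjM : j = M + 1 := by omega
      subst hjM
      rw [if_neg]
      have h1 : M + 1 ≤ (2*k+2)*(M+1) := Nat.le_mul_of_pos_left _ (by omega)
      omega
    have houter : Finset.Icc (m - (M:ℤ)) (m + (M:ℤ))
        ⊆ Finset.Icc (m - ((M+1:ℕ):ℤ)) (m + ((M+1:ℕ):ℤ)) := by
      apply Finset.Icc_subset_Icc <;> push_cast <;> omega
    have ext1 : (∑ n ∈ Finset.Icc (m - (M:ℤ)) (m + (M:ℤ)), ∑ j ∈ Finset.range (M+1),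
        if (k+1) * (m - n).natAbs + (2*k+2) * j ≤ M then
          (akm k n (M - ((k+1) * (m - n).natAbs + (2*k+2) * j)) : ℤ) else 0)
      = ∑ n ∈ Finset.Icc (m - ((M+1:ℕ):ℤ)) (m + ((M+1:ℕ):ℤ)), ∑ j ∈ Finset.range (M+2),
        if (k+1) * (m - n).natAbs + (2*k+2) * j ≤ M then
          (akm k n (M - ((k+1) * (m - n).natAbs + (2*k+2) * j)) : ℤ) else 0 :=
      calc (∑ n ∈ Finset.Icc (m - (M:ℤ)) (m + (M:ℤ)), ∑ j ∈ Finset.range (M+1),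
            if (k+1) * (m - n).natAbs + (2*k+2) * j ≤ M then
              (akm k n (M - ((k+1) * (m - n).natAbs + (2*k+2) * j)) : ℤ) else 0)
          = ∑ n ∈ Finset.Icc (m - (M:ℤ)) (m + (M:ℤ)), ∑ j ∈ Finset.range (M+2),
            if (k+1) * (m - n).natAbs + (2*k+2) * j ≤ M then
              (akm k n (M - ((k+1) * (m - n).natAbs + (2*k+2) * j)) : ℤ) else 0 :=
          Finset.sum_congr rfl fun n _ => inner n
        _ = _ := by
          refine Finset.sum_subset houter (fun n hn hn' => Finset.sum_eq_zero fun j _ => ?_)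
          rw [if_neg]
          have habs : M + 1 ≤ (m - n).natAbs := by
            simp only [Finset.mem_Icc] at hn hn'
            push_cast at hn hn' ⊢
            omega
          have h2 : M + 1 ≤ (k+1) * (m - n).natAbs :=
            le_trans habs (Nat.le_mul_of_pos_left _ (by omega))
          omega
    rw [ext1, ← Finset.sum_sub_distrib]
    refine Finset.sum_congr rfl fun n _ => ?_
    rw [← Finset.sum_sub_distrib]
    refine Finset.sum_congr rfl fun j _ => ?_
    set o := (k+1) * (m - n).natAbs + (2*k+2) * j with ho
    by_cases h1 : o ≤ M + 1
    · by_cases h2 : o ≤ M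
      · rw [if_pos h1, if_pos h2, if_pos h1]
        simp only [fmk, if_neg (show ¬(M + 1 - o = 0) by omega)]
        rw [show M - o = M + 1 - o - 1 by omega]
      · rw [if_pos h1, if_neg h2, if_pos h1]
        rw [show M + 1 - o = 0 by omega]
        simp [fmk]
    · rw [if_neg h1, if_neg (by omega), if_neg h1]
      ring
end

section
/- For every k ≥ 0 and every integer m ≥ 0, the coefficient of z^m q^n in (1 − z^{−2}) / ((qz;q)_k (q/z;q)_k) is nonnegative for all n ≥ 0. -/
/-!
Pairs `(α, β)` with `∑ α - ∑ β = m + 2` inject, preserving the weight, into those with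
difference `m`, by the lowering operator of the `sl₂` crystal: read the walk
`Q(s) = ∑_{i<s} α_i - ∑_{i≤s} β_i` on `[0, k]` and move one unit from `α_t` to `β_t`, where `t`
is the last minimum of `Q`. Since `Q(0) ≤ 0 < m + 2 = Q(k)`, `t < k` and `Q` rises right after
`t`, so `α_t > 0`. The move lowers `Q` by `1` at `t` and by `2` after it, so `t` becomes the first
minimum of the new walk; hence `t`, and with it `(α, β)`, can be read off the image.
-/

open Finset

section Argmin

variable {α : Type*} [LinearOrder α]

def lastArgmin (f : ℕ → α) (k : ℕ) : ℕ :=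
  Nat.findGreatest (fun s => ∀ u ≤ k, f s ≤ f u) k

variable (f : ℕ → α) (k : ℕ)

theorem lastArgmin_le : lastArgmin f k ≤ k :=
  Nat.findGreatest_le k

theorem apply_lastArgmin_le {u : ℕ} (hu : u ≤ k) : f (lastArgmin f k) ≤ f u := by
  obtain ⟨s, hs, hmin⟩ := exists_min_image (range (k + 1)) f nonempty_range_add_one
  refine Nat.findGreatest_spec (P := fun s => ∀ u ≤ k, f s ≤ f u)
    (by simpa [Nat.lt_succ_iff] using hs) ?_ u hu
  exact fun v hv => hmin v (by simpa [Nat.lt_succ_iff] using hv)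

theorem apply_lastArgmin_lt {u : ℕ} (hu : u ≤ k) (h : lastArgmin f k < u) :
    f (lastArgmin f k) < f u := by
  by_contra! hle
  have hmin : ∀ v ≤ k, f u ≤ f v := fun v hv => hle.trans (apply_lastArgmin_le f k hv)
  exact h.not_ge (Nat.le_findGreatest hu hmin)

def IsFirstArgmin (g : ℕ → α) (k t : ℕ) : Prop :=
  t ≤ k ∧ (∀ u ≤ k, g t ≤ g u) ∧ ∀ u < t, g t < g u

theorem IsFirstArgmin.unique {g : ℕ → α} {k t t' : ℕ} (h : IsFirstArgmin g k t)
    (h' : IsFirstArgmin g k t') : t = t' := by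
  obtain ⟨htk, hmin, hfirst⟩ := h
  obtain ⟨htk', hmin', hfirst'⟩ := h'
  refine le_antisymm (not_lt.1 fun hlt => ?_) (not_lt.1 fun hlt => ?_)
  · exact (hfirst t' hlt).not_ge (hmin' t htk)
  · exact (hfirst' t hlt).not_ge (hmin t' htk')

end Argmin

theorem isFirstArgmin_lastArgmin (f : ℕ → ℤ) (k : ℕ) :
    IsFirstArgmin (fun s => f s - (if lastArgmin f k < s then 1 else 0)
      - (if lastArgmin f k ≤ s then 1 else 0)) k (lastArgmin f k) := by
  refine ⟨lastArgmin_le f k, fun u hu => ?_, fun u hu => ?_⟩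
  · have := apply_lastArgmin_le f k hu
    by_cases h : lastArgmin f k < u
    · have := apply_lastArgmin_lt f k hu h
      grind
    · grind
  · have := apply_lastArgmin_le f k (hu.le.trans (lastArgmin_le f k))
    grind

namespace Akm

section Walk

variable {k : ℕ} (a b : Fin k → ℤ)

def walk (s : ℕ) : ℤ :=
  ∑ i : Fin k with i.val < s, a i - ∑ i : Fin k with i.val ≤ s, b i

theorem walk_zero_nonpos (hb : 0 ≤ b) : walk a b 0 ≤ 0 := by
  have : 0 ≤ ∑ i : Fin k with i.val ≤ 0, b i := sum_nonneg fun i _ => hb i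
  simpa [walk] using this

theorem walk_self : walk a b k = ∑ i, a i - ∑ i, b i := by
  simp [walk, Fin.is_lt, Fin.is_le']

theorem walk_succ_le (hb : 0 ≤ b) (t : Fin k) : walk a b (t + 1) ≤ walk a b t + a t := by
  have ha : ∑ i : Fin k with i.val < t.val + 1, a i
      = ∑ i : Fin k with i.val < t.val, a i + a t := by
    have hcons : ({i : Fin k | i.val < t.val + 1} : Finset (Fin k))
        = cons t {i : Fin k | i.val < t.val} (by simp) := by
      ext i; simp [Fin.ext_iff]; omega
    rw [hcons, sum_cons, add_comm]
  have hb' : ∑ i : Fin k with i.val ≤ t.val, b i ≤ ∑ i : Fin k with i.val ≤ t.val + 1, b i :=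
    sum_le_sum_of_subset_of_nonneg (monotone_filter_right _ fun i h => by grind)
      fun i _ _ => hb i
  simp only [walk]
  linarith

theorem walk_sub_single_add_single (t : Fin k) (s : ℕ) :
    walk (a - Pi.single t 1) (b + Pi.single t 1) s
      = walk a b s - (if (t : ℕ) < s then 1 else 0) - (if (t : ℕ) ≤ s then 1 else 0) := by
  simp [walk, sum_sub_distrib, sum_add_distrib, sum_pi_single']
  ring

end Walk

section Pairs

variable {k n : ℕ}

theorem val_sub_single_one (f : Fin k → Fin (n + 1)) {t : Fin k} (h : f t ≠ 0) :
    (fun i => (((f - Pi.single t 1 : Fin k → Fin (n + 1)) i : ℕ) : ℤ))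
      = (fun i => ((f i : ℕ) : ℤ)) - Pi.single t 1 := by
  funext i
  rcases eq_or_ne i t with rfl | hi
  · simp [Fin.coe_sub_one, h, Nat.one_le_iff_ne_zero]
  · simp [hi]

theorem val_add_single_one (f : Fin k → Fin (n + 1)) {t : Fin k} (h : f t ≠ Fin.last n) :
    (fun i => (((f + Pi.single t 1 : Fin k → Fin (n + 1)) i : ℕ) : ℤ))
      = (fun i => ((f i : ℕ) : ℤ)) + Pi.single t 1 := by
  funext i
  rcases eq_or_ne i t with rfl | hi
  · simp [Fin.val_add_one, h]
  · simp [hi]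

variable (p : (Fin k → Fin (n + 1)) × (Fin k → Fin (n + 1)))

def weight : ℕ := ∑ i : Fin k, (i.1 + 1) * ((p.1 i : ℕ) + (p.2 i : ℕ))

def charge : ℤ := (∑ i : Fin k, ((p.1 i : ℕ) : ℤ)) - ∑ i : Fin k, ((p.2 i : ℕ) : ℤ)

theorem akm_eq_card (m : ℤ) :
    akm k m n
      = #{p : (Fin k → Fin (n + 1)) × (Fin k → Fin (n + 1)) | weight p = n ∧ charge p = m} :=
  rfl

def pairWalk : ℕ → ℤ :=
  walk (fun i => ((p.1 i : ℕ) : ℤ)) (fun i => ((p.2 i : ℕ) : ℤ))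

def lowerIndex : ℕ :=
  lastArgmin (pairWalk p) k

def lower (t : Fin k) : (Fin k → Fin (n + 1)) × (Fin k → Fin (n + 1)) :=
  (p.1 - Pi.single t 1, p.2 + Pi.single t 1)

theorem lower_injective (t : Fin k) : Function.Injective (lower (n := n) · t) := by
  intro p q h
  simpa [lower, Prod.ext_iff] using h

theorem charge_eq_pairWalk : charge p = pairWalk p k :=
  (walk_self _ _).symm

theorem pairWalk_zero_nonpos : pairWalk p 0 ≤ 0 :=
  walk_zero_nonpos _ _ fun _ => Int.natCast_nonneg _

theorem lowerIndex_lt (hp : 0 < charge p) : lowerIndex p < k := by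
  refine (lastArgmin_le _ _).lt_of_ne fun (h : lowerIndex p = k) => ?_
  have := apply_lastArgmin_le (pairWalk p) k (Nat.zero_le k)
  rw [← lowerIndex, h, ← charge_eq_pairWalk] at this
  linarith [pairWalk_zero_nonpos p]

theorem fst_lowerIndex_ne_zero (hp : 0 < charge p) :
    p.1 ⟨lowerIndex p, lowerIndex_lt p hp⟩ ≠ 0 := by
  intro h0
  have hrise := apply_lastArgmin_lt (pairWalk p) k (lowerIndex_lt p hp) (lt_add_one _)
  have hstep := walk_succ_le (fun i => ((p.1 i : ℕ) : ℤ)) _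
    (fun i => Int.natCast_nonneg (p.2 i : ℕ)) ⟨lowerIndex p, lowerIndex_lt p hp⟩
  simp only [h0, Fin.val_zero, Nat.cast_zero, add_zero] at hstep
  exact hrise.not_ge hstep

theorem snd_ne_last (hw : weight p = n) {t : Fin k} (ht : p.1 t ≠ 0) : p.2 t ≠ Fin.last n := by
  intro hl
  have := single_le_sum (f := fun i : Fin k => (i.1 + 1) * ((p.1 i : ℕ) + (p.2 i : ℕ)))
    (fun _ _ => Nat.zero_le _) (mem_univ t)
  rw [← weight, hw, hl, Fin.val_last] at this
  have : 0 < (p.1 t : ℕ) := Nat.pos_of_ne_zero (Fin.val_ne_zero_iff.2 ht)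
  nlinarith

section Lower

variable {p} {t : Fin k} (h₁ : p.1 t ≠ 0) (h₂ : p.2 t ≠ Fin.last n)
include h₁ h₂

theorem pairWalk_lower (s : ℕ) :
    pairWalk (lower p t) s
      = pairWalk p s - (if (t : ℕ) < s then 1 else 0) - (if (t : ℕ) ≤ s then 1 else 0) := by
  simp only [pairWalk, lower, val_sub_single_one _ h₁, val_add_single_one _ h₂]
  exact walk_sub_single_add_single _ _ t s

theorem charge_lower : charge (lower p t) = charge p - 2 := by
  simp [charge_eq_pairWalk, pairWalk_lower h₁ h₂, t.is_lt, t.is_le']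
  ring

theorem weight_lower : weight (lower p t) = weight p := by
  refine sum_congr rfl fun i _ => congrArg _ ?_
  have e := congrFun (congrArg₂ (· + ·) (val_sub_single_one _ h₁) (val_add_single_one _ h₂)) i
  rw [sub_add_add_cancel] at e
  exact Int.ofNat_inj.1 e

end Lower

theorem isFirstArgmin_pairWalk_lower (hp : 0 < charge p) (hw : weight p = n) :
    IsFirstArgmin (pairWalk (lower p ⟨lowerIndex p, lowerIndex_lt p hp⟩)) k (lowerIndex p) := by
  have h₁ := fst_lowerIndex_ne_zero p hp
  rw [funext (pairWalk_lower h₁ (snd_ne_last p hw h₁))]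
  exact isFirstArgmin_lastArgmin (pairWalk p) k

end Pairs

end Akm

open Akm

theorem akm_add_two_le {k n : ℕ} {m : ℤ} (hm : 0 ≤ m) : akm k (m + 2) n ≤ akm k m n := by
  rw [akm_eq_card, akm_eq_card, ← Fintype.card_coe, ← Fintype.card_coe]
  have hpos (p : (Fin k → Fin (n + 1)) × (Fin k → Fin (n + 1)))
      (hp : p ∈ ({p | weight p = n ∧ charge p = m + 2} : Finset _)) : 0 < charge p := by
    rw [(mem_filter.1 hp).2.2]; omega
  refine Fintype.card_le_of_injective
    (fun p => ⟨lower p.1 ⟨lowerIndex p.1, lowerIndex_lt p.1 (hpos p.1 p.2)⟩, ?_⟩) ?_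
  · obtain ⟨hw, hc⟩ := (mem_filter.1 p.2).2
    have h₁ := fst_lowerIndex_ne_zero p.1 (hpos p.1 p.2)
    have h₂ := snd_ne_last p.1 hw h₁
    refine mem_filter.2 ⟨mem_univ _, (weight_lower h₁ h₂).trans hw, ?_⟩
    rw [charge_lower h₁ h₂, hc]
    ring
  · rintro ⟨p, hp⟩ ⟨p', hp'⟩ h
    simp only [Subtype.mk.injEq] at h
    have ht : lowerIndex p = lowerIndex p' :=
      (isFirstArgmin_pairWalk_lower p (hpos p hp) (mem_filter.1 hp).2.1).unique
        (h ▸ isFirstArgmin_pairWalk_lower p' (hpos p' hp') (mem_filter.1 hp').2.1)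
    simp only [ht] at h
    exact Subtype.ext (lower_injective _ h)

/-- For `m ≥ 0`, the coefficient of `z^m q^n` in `(1 - z^{-2})/((qz;q)_k (q/z;q)_k)`,
namely `a_{k,m}(n) - a_{k,m+2}(n)`, is nonnegative. -/
theorem coeff_one_sub_zinvsq_nonneg (k : ℕ) (m : ℤ) (hm : 0 ≤ m) (n : ℕ) :
    0 ≤ (akm k m n : ℤ) - akm k (m + 2) n :=
  sub_nonneg.2 (Nat.cast_le.2 (akm_add_two_le hm))
end
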